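/- In Cl(15,0), the 8-form Φ_O' obtained by multiplying each term of Φ_O = e_{12389AB} + ... + e_{3568BDE} by the pseudoscalar satisfies (3·e_{123456789ABCDEF} - Φ_O)² = -16. -/

import Mathlib

noncomputable def Q15 : QuadraticForm ℝ (Fin 15 → ℝ) :=
  QuadraticMap.weightedSumSquares ℝ (fun _ : Fin 15 => (1 : ℝ))

noncomputable def e15 (i : Fin 15) : CliffordAlgebra Q15 :=
  CliffordAlgebra.ι Q15 (Pi.single i 1)

/-- Product of generators with the given (0-based) indices;
hexadecimal index k of the paper corresponds to k-1 here. -/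
noncomputable def p15 (l : List (Fin 15)) : CliffordAlgebra Q15 := (l.map e15).prod

/-- Φ_A = e1234567. -/
noncomputable def ΦA : CliffordAlgebra Q15 := p15 [0,1,2,3,4,5,6]

/-- Φ_O = e_{12389AB} + e_{14589CD} + e_{16789EF} + e_{2468ACE} + e_{2578ADF}
  + e_{3478BCF} + e_{3568BDE}. -/
noncomputable def ΦO : CliffordAlgebra Q15 :=
  p15 [0,1,2,7,8,9,10] + p15 [0,3,4,7,8,11,12] + p15 [0,5,6,7,8,13,14]
    + p15 [1,3,5,7,9,11,13] + p15 [1,4,6,7,9,12,14] + p15 [2,3,6,7,10,11,14]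
    + p15 [2,4,5,7,10,12,13]

/-- Φ_P = e_{123CDEF} + e_{145ABEF} + e_{167ABCD} + e_{2469BDF} + e_{2579BCE}
  + e_{3479ADE} + e_{3569ACF}. -/
noncomputable def ΦP : CliffordAlgebra Q15 :=
  p15 [0,1,2,11,12,13,14] + p15 [0,3,4,9,10,13,14] + p15 [0,5,6,9,10,11,12]
    + p15 [1,3,5,8,10,12,14] + p15 [1,4,6,8,10,11,13] + p15 [2,3,6,8,9,12,13]
    + p15 [2,4,5,8,9,11,14]

/-- The pseudoscalar e_{123456789ABCDEF}. -/
noncomputable def ω15 : CliffordAlgebra Q15 :=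
  p15 [0,1,2,3,4,5,6,7,8,9,10,11,12,13,14]

/-
The pseudoscalar ω of Cl(15,0) is central (15 is odd) and ω² = -1 (15·14/2 is odd).
The seven 7-blades of Φ_O each square to -1; any two share exactly three indices, so they
commute, and their product is ± ω times a third blade, each blade arising from three pairs.
Hence Φ_O² = -7 + 6 ωΦ_O, and (3ω - Φ_O)² = -9 - 6 ωΦ_O + Φ_O² = -16.
-/

namespace QuadraticMap

variable {R ι : Type*} [CommRing R] [Fintype ι] [DecidableEq ι] (w : ι → R)

theorem weightedSumSquares_single (i : ι) : weightedSumSquares R w (Pi.single i 1) = w i := by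
  simp [weightedSumSquares_apply, Pi.single_apply]

theorem isOrtho_weightedSumSquares_single {i j : ι} (h : i ≠ j) :
    (weightedSumSquares R w).IsOrtho (Pi.single i 1) (Pi.single j 1) := by
  rw [isOrtho_def, weightedSumSquares_single, weightedSumSquares_single, weightedSumSquares_apply,
    Fintype.sum_eq_add i j h fun k hk => by simp [hk.1, hk.2]]
  simp [h, h.symm]

end QuadraticMap

/- Together with `mul_assoc`, the next four simp lemmas bubble-sort any word in the generators
into ± an increasing word; `simp +decide` discharges the index comparisons. -/
@[simp] theorem e15_mul_self (i : Fin 15) : e15 i * e15 i = 1 := by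
  rw [e15, CliffordAlgebra.ι_sq_scalar, Q15, QuadraticMap.weightedSumSquares_single, map_one]

@[simp] theorem e15_mul_e15_mul_self (i : Fin 15) (x : CliffordAlgebra Q15) :
    e15 i * (e15 i * x) = x := by
  rw [← mul_assoc, e15_mul_self, one_mul]

@[simp] theorem e15_mul_e15_of_lt {i j : Fin 15} (h : j < i) :
    e15 i * e15 j = -(e15 j * e15 i) :=
  CliffordAlgebra.ι_mul_ι_comm_of_isOrtho (QuadraticMap.isOrtho_weightedSumSquares_single _ h.ne')

@[simp] theorem e15_mul_e15_mul_of_lt {i j : Fin 15} (h : j < i) (x : CliffordAlgebra Q15) :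
    e15 i * (e15 j * x) = -(e15 j * (e15 i * x)) :=
  CliffordAlgebra.ι_mul_ι_mul_of_isOrtho x
    (QuadraticMap.isOrtho_weightedSumSquares_single _ h.ne')

theorem ω15_mul_self : ω15 * ω15 = -1 := by
  simp +decide [ω15, p15, mul_assoc]

theorem commute_e15_ω15 (i : Fin 15) : Commute (e15 i) ω15 := by
  fin_cases i <;> simp +decide [Commute, SemiconjBy, ω15, p15, mul_assoc]

theorem commute_p15_ω15 (l : List (Fin 15)) : Commute (p15 l) ω15 :=
  Commute.list_prod_left _ _ fun _ hx => by
    obtain ⟨i, -, rfl⟩ := List.mem_map.mp hx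
    exact commute_e15_ω15 i

theorem commute_ΦO_ω15 : Commute ΦO ω15 := by
  unfold ΦO
  repeat refine Commute.add_left ?_ (commute_p15_ω15 _)
  exact commute_p15_ω15 _

theorem ΦO_sq : ΦO ^ 2 = 6 * (ω15 * ΦO) - 7 := by
  simp +decide [sq, ΦO, ω15, p15, mul_add, add_mul, mul_assoc]
  noncomm_ring
  norm_num
  abel

theorem stmt17 : (3 * ω15 - ΦO) ^ 2 = -16 := by
  calc (3 * ω15 - ΦO) ^ 2
        = 9 * (ω15 * ω15) - 3 * (ω15 * ΦO) - 3 * (ΦO * ω15) + ΦO ^ 2 := by noncomm_ring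
    _ = 9 * -1 - 3 * (ω15 * ΦO) - 3 * (ω15 * ΦO) + (6 * (ω15 * ΦO) - 7) := by
        rw [ω15_mul_self, commute_ΦO_ω15.eq, ΦO_sq]
    _ = -16 := by noncomm_ring; norm_num
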